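/- Let Ω ⊆ ℂⁿ be an open set and let φ: Ω → ℝ be a C² function satisfying i∂∂̄φ ≥ 5β. Define ψ: [0, ∞) → ℝ by ψ(t) = t²/2 + 1/2 for t < 1 and ψ(t) = t for t ≥ 1, let χ(z) = ψ(|z|), and for k ≥ 1 set χ_k(z) = χ(√k·z). Then at every z ∈ Ω with √k·|z| ≠ 1, the function kφ − χ_k is twice differentiable and its Levi form satisfies L_{kφ−χ_k}(z; w) ≥ 4k|w|² for all w ∈ ℂⁿ. -/

import Mathlib

open MeasureTheory Complex Metric Set
open scoped ComplexConjugate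

noncomputable section

/-- `ℂⁿ` with the Euclidean norm. -/
abbrev Cn (n : ℕ) := EuclideanSpace ℂ (Fin n)

variable {n : ℕ}

instance : MeasurableSpace (Cn n) := borel _
instance : BorelSpace (Cn n) := ⟨rfl⟩

/-- The Levi form of `φ` at `z` applied to `w`:
`L_φ(z; w) = ¼ (D²φ(z)[w,w] + D²φ(z)[iw,iw])` where `D²φ` is the second real Fréchet
derivative. -/
def LeviForm (φ : Cn n → ℝ) (z w : Cn n) : ℝ :=
  (1 / 4) * (fderiv ℝ (fderiv ℝ φ) z w w +
    fderiv ℝ (fderiv ℝ φ) z (Complex.I • w) (Complex.I • w))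

/-- `Ω` is pseudoconvex: it admits a `C²` exhaustion function with nonnegative Levi form. -/
def Pseudoconvex (Ω : Set (Cn n)) : Prop :=
  ∃ ρ : Cn n → ℝ, ContDiffOn ℝ 2 ρ Ω ∧
    (∀ c : ℝ, IsCompact {z ∈ Ω | ρ z ≤ c}) ∧
    ∀ z ∈ Ω, ∀ w : Cn n, 0 ≤ LeviForm ρ z w

/-- The `j`-th standard basis vector of `ℂⁿ`. -/
def e (n : ℕ) (j : Fin n) : Cn n := EuclideanSpace.single j (1 : ℂ)

/-- The components of `∂̄v`: `(∂̄v)_j = ½(∂v/∂x_j + i ∂v/∂y_j)`. -/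
def dbar (v : Cn n → ℂ) (z : Cn n) (j : Fin n) : ℂ :=
  (1 / 2) * (fderiv ℝ v z (e n j) + Complex.I * fderiv ℝ v z (Complex.I • e n j))

/-- The pointwise squared norm `|f(z)|² = Σ_j |f_j(z)|²` of a `(0,1)`-form. -/
def formNormSq (f : Cn n → Fin n → ℂ) (z : Cn n) : ℝ := ∑ j, ‖f z j‖ ^ 2

/-- A `(0,1)`-form `f` is smooth on `Ω` if each component is. -/
def SmoothFormOn (Ω : Set (Cn n)) (f : Cn n → Fin n → ℂ) : Prop :=
  ∀ j, ContDiffOn ℝ (⊤ : ℕ∞) (fun z => f z j) Ω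

/-- A `(0,1)`-form `f` is `∂̄`-closed on `Ω` if `(∂̄f_j)_k = (∂̄f_k)_j` on `Ω`. -/
def DbarClosedOn (Ω : Set (Cn n)) (f : Cn n → Fin n → ℂ) : Prop :=
  ∀ z ∈ Ω, ∀ j k : Fin n, dbar (fun w => f w j) z k = dbar (fun w => f w k) z j

/-- `v` belongs to the weighted space `L²(Ω, e^{-w})`. -/
def MemL2 (Ω : Set (Cn n)) (w : Cn n → ℝ) (v : Cn n → ℂ) : Prop :=
  AEStronglyMeasurable v (volume.restrict Ω) ∧
  IntegrableOn (fun z => ‖v z‖ ^ 2 * Real.exp (-w z)) Ω volume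

/-- `v` is orthogonal to every holomorphic function in `L²(Ω, e^{-w})`. -/
def OrthToHolo (Ω : Set (Cn n)) (w : Cn n → ℝ) (v : Cn n → ℂ) : Prop :=
  ∀ h : Cn n → ℂ, DifferentiableOn ℂ h Ω → MemL2 Ω w h →
    ∫ z in Ω, v z * conj (h z) * (Real.exp (-w z) : ℂ) = 0

/-- `ψ` is a test function on `Ω`. -/
def IsTestOn (Ω : Set (Cn n)) (ψ : Cn n → ℂ) : Prop :=
  ContDiff ℝ (⊤ : ℕ∞) ψ ∧ HasCompactSupport ψ ∧ tsupport ψ ⊆ Ω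

/-- `∂̄v = f` on `Ω` in the sense of distributions. -/
def DbarEqOn (Ω : Set (Cn n)) (v : Cn n → ℂ) (f : Cn n → Fin n → ℂ) : Prop :=
  ∀ ψ : Cn n → ℂ, IsTestOn Ω ψ → ∀ j : Fin n,
    ∫ z in Ω, v z * dbar ψ z j = -∫ z in Ω, f z j * ψ z

/-- `v` is the `L²(Ω, e^{-w})`-minimal solution of `∂̄v = f`: it solves the equation in the
sense of distributions and is orthogonal to all holomorphic functions in `L²(Ω, e^{-w})`. -/
def MinimalSolution (Ω : Set (Cn n)) (w : Cn n → ℝ) (f : Cn n → Fin n → ℂ) (v : Cn n → ℂ) :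
    Prop :=
  MemL2 Ω w v ∧ DbarEqOn Ω v f ∧ OrthToHolo Ω w v


open scoped RealInnerProductSpace

/-- The real inner product on `ℂⁿ` as a continuous bilinear map. -/
def rinn {n : ℕ} : Cn n →L[ℝ] Cn n →L[ℝ] ℝ := innerSL ℝ

lemma rinn_self {n : ℕ} (x : Cn n) : rinn x x = ‖x‖^2 := real_inner_self_eq_norm_sq x

lemma hasFDerivAt_normSq' {n : ℕ} (y : Cn n) :
    HasFDerivAt (fun x : Cn n => ‖x‖^2) ((2:ℝ) • rinn y) y := by
  have h := HasFDerivAt.inner ℝ (hasFDerivAt_id (𝕜 := ℝ) y) (hasFDerivAt_id y)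
  simp only [id_eq] at h
  have hfun : (fun t : Cn n => (inner ℝ t t : ℝ)) = fun x : Cn n => ‖x‖^2 :=
    funext fun t => real_inner_self_eq_norm_sq t
  rw [hfun] at h
  refine h.congr_fderiv ?_
  ext w
  simp only [ContinuousLinearMap.comp_apply, ContinuousLinearMap.prod_apply,
    ContinuousLinearMap.id_apply, ContinuousLinearMap.smul_apply, smul_eq_mul,
    fderivInnerCLM_apply]
  rw [show (rinn y) w = (inner ℝ y w : ℝ) from rfl]
  rw [real_inner_comm w y]
  ring

lemma hasFDerivAt_norm' {n : ℕ} (y : Cn n) (hy : y ≠ 0) :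
    HasFDerivAt (fun x : Cn n => ‖x‖) (‖y‖⁻¹ • rinn y) y := by
  have h0 : ‖y‖ ≠ 0 := norm_ne_zero_iff.2 hy
  have h2 : (‖y‖:ℝ)^2 ≠ 0 := pow_ne_zero 2 h0
  have h := (Real.hasDerivAt_sqrt h2).comp_hasFDerivAt y (hasFDerivAt_normSq' y)
  simp only [Function.comp_def] at h
  have hfun : (fun x : Cn n => Real.sqrt (‖x‖^2)) = fun x : Cn n => ‖x‖ :=
    funext fun x => by rw [Real.sqrt_sq (norm_nonneg x)]
  rw [hfun] at h
  refine h.congr_fderiv ?_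
  rw [Real.sqrt_sq (norm_nonneg y), smul_smul]
  congr 1
  field_simp

set_option maxHeartbeats 1000000 in
/-- If `i∂∂̄φ ≥ 5β` on `Ω`, `k ≥ 1`, and `χ_k(z) = χ(√k·z)` with `χ(z) = ψ(|z|)`, then at
every `z ∈ Ω` with `√k·|z| ≠ 1` the function `kφ - χ_k` is twice differentiable and its
Levi form satisfies `L_{kφ - χ_k}(z; w) ≥ 4k|w|²`. -/
theorem levi_form_weight_minus_chi
    (Ω : Set (Cn n)) (hΩ : IsOpen Ω)
    (φ : Cn n → ℝ) (hφC2 : ContDiffOn ℝ 2 φ Ω)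
    (hLevi : ∀ z ∈ Ω, ∀ w : Cn n, 5 * ‖w‖ ^ 2 ≤ LeviForm φ z w)
    (k : ℝ) (hk : 1 ≤ k)
    (ψ : ℝ → ℝ) (hψ : ∀ t : ℝ, 0 ≤ t → ψ t = if t < 1 then t ^ 2 / 2 + 1 / 2 else t)
    (χ : Cn n → ℝ) (hχ : ∀ z : Cn n, χ z = ψ ‖z‖)
    (χk : Cn n → ℝ) (hχk : ∀ z : Cn n, χk z = χ (Real.sqrt k • z)) :
    ∀ z ∈ Ω, Real.sqrt k * ‖z‖ ≠ 1 →
      (∀ᶠ y in nhds z, DifferentiableAt ℝ (fun w => k * φ w - χk w) y) ∧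
      DifferentiableAt ℝ (fderiv ℝ (fun w => k * φ w - χk w)) z ∧
      ∀ w : Cn n, 4 * k * ‖w‖ ^ 2 ≤ LeviForm (fun w => k * φ w - χk w) z w := by
  intro z hzΩ hz1
  have hk0 : (0:ℝ) < k := lt_of_lt_of_le one_pos hk
  set c := Real.sqrt k with hcdef
  have hc0 : 0 < c := Real.sqrt_pos.2 hk0
  have hc2 : c^2 = k := Real.sq_sqrt hk0.le
  have hnorm : ∀ y : Cn n, ‖(c • y : Cn n)‖ = c * ‖y‖ := fun y => by
    rw [norm_smul, Real.norm_eq_abs, _root_.abs_of_nonneg hc0.le]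
  have hχk' : ∀ y : Cn n, χk y = ψ (c * ‖y‖) := fun y => by
    rw [hχk, hχ, hnorm]
  have hIw : ∀ w : Cn n, ‖(Complex.I • w : Cn n)‖ = ‖w‖ := fun w => by
    rw [norm_smul]; simp
  obtain ⟨D, D2, hD, hD2, hbound⟩ :
      ∃ D : Cn n → (Cn n →L[ℝ] ℝ), ∃ D2 : Cn n →L[ℝ] (Cn n →L[ℝ] ℝ),
        (∀ᶠ y in nhds z, HasFDerivAt χk (D y) y) ∧ HasFDerivAt D D2 z ∧
        ∀ w : Cn n, D2 w w + D2 (Complex.I • w) (Complex.I • w) ≤ 2 * k * ‖w‖^2 := by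
    rcases lt_or_gt_of_ne hz1 with hlt | hgt
    · -- case `c‖z‖ < 1`
      refine ⟨fun y => k • rinn y, k • rinn, ?_, ?_, ?_⟩
      · have hU : IsOpen {y : Cn n | c * ‖y‖ < 1} :=
          isOpen_lt (continuous_const.mul continuous_norm) continuous_const
        filter_upwards [hU.mem_nhds hlt] with y hy
        have heq : χk =ᶠ[nhds y] fun x : Cn n => (k/2) * ‖x‖^2 + 1/2 := by
          filter_upwards [hU.mem_nhds hy] with x hx
          rw [hχk' x, hψ _ (by positivity), if_pos hx, mul_pow, hc2]
          ring
        have hder : HasFDerivAt (fun x : Cn n => (k/2) * ‖x‖^2 + 1/2) (k • rinn y) y := by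
          refine (((hasFDerivAt_normSq' y).const_mul (k/2)).add_const (1/2)).congr_fderiv ?_
          rw [smul_smul]
          congr 1
          ring
        exact hder.congr_of_eventuallyEq heq
      · exact (rinn.hasFDerivAt (x := z)).const_smul k
      · intro w
        simp only [ContinuousLinearMap.smul_apply, smul_eq_mul, rinn_self]
        rw [hIw w]
        nlinarith [norm_nonneg w]
    · -- case `1 < c‖z‖`
      have hU : IsOpen {y : Cn n | 1 < c * ‖y‖} :=
        isOpen_lt continuous_const (continuous_const.mul continuous_norm)
      have hne : ∀ y : Cn n, 1 < c * ‖y‖ → y ≠ 0 := by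
        intro y hy h0
        rw [h0] at hy
        simp at hy
        linarith
      have hz0 : z ≠ 0 := hne z hgt
      have hzn : (0:ℝ) < ‖z‖ := norm_pos_iff.2 hz0
      have ha : HasFDerivAt (fun y : Cn n => c * ‖y‖⁻¹)
          ((c * -(‖z‖^2)⁻¹) • (‖z‖⁻¹ • rinn z)) z :=
        ((hasDerivAt_inv hzn.ne').const_mul c).comp_hasFDerivAt z (hasFDerivAt_norm' z hz0)
      set D2' : Cn n →L[ℝ] (Cn n →L[ℝ] ℝ) :=
        (c * ‖z‖⁻¹) • rinn + ((c * -(‖z‖^2)⁻¹) • (‖z‖⁻¹ • rinn z)).smulRight (rinn z)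
        with hD2'
      refine ⟨fun y => (c * ‖y‖⁻¹) • rinn y, D2', ?_, ?_, ?_⟩
      · filter_upwards [hU.mem_nhds hgt] with y hy
        have hy0 : y ≠ 0 := hne y hy
        have heq : χk =ᶠ[nhds y] fun x : Cn n => c * ‖x‖ := by
          filter_upwards [hU.mem_nhds hy] with x hx
          rw [hχk' x, hψ _ (by positivity), if_neg (not_lt.2 hx.le)]
        have hder : HasFDerivAt (fun x : Cn n => c * ‖x‖) ((c * ‖y‖⁻¹) • rinn y) y := by
          refine ((hasFDerivAt_norm' y hy0).const_mul c).congr_fderiv ?_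
          rw [smul_smul]
        exact hder.congr_of_eventuallyEq heq
      · exact ha.smul (rinn.hasFDerivAt (x := z))
      · intro w
        have key : ∀ v : Cn n, D2' v v ≤ k * ‖v‖^2 := by
          intro v
          rw [hD2']
          simp only [ContinuousLinearMap.add_apply, ContinuousLinearMap.smul_apply,
            ContinuousLinearMap.smulRight_apply, smul_eq_mul, rinn_self]
          have hp : 0 ≤ (rinn z v)^2 := sq_nonneg _
          have hterm : (c * -(‖z‖^2)⁻¹ * (‖z‖⁻¹ * rinn z v)) * (rinn z v) ≤ 0 := by
            have h1 : 0 ≤ c * (‖z‖^2)⁻¹ * ‖z‖⁻¹ * (rinn z v)^2 := by positivity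
            nlinarith [h1]
          have hck : c * ‖z‖⁻¹ ≤ k := by
            rw [← div_eq_mul_inv, div_le_iff₀ hzn]
            nlinarith [mul_nonneg hc0.le (sub_nonneg.2 hgt.le)]
          have h2 : c * ‖z‖⁻¹ * ‖v‖^2 ≤ k * ‖v‖^2 :=
            mul_le_mul_of_nonneg_right hck (by positivity)
          nlinarith [hterm, h2]
        have k1 := key w
        have k2 := key (Complex.I • w)
        rw [hIw w] at k2
        linarith
  have hzmem : Ω ∈ nhds z := hΩ.mem_nhds hzΩ
  have hφdiff : ∀ᶠ y in nhds z, DifferentiableAt ℝ φ y := by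
    filter_upwards [hzmem] with y hy
    exact (hφC2.contDiffAt (hΩ.mem_nhds hy)).differentiableAt two_ne_zero
  have hdφ : DifferentiableAt ℝ (fderiv ℝ φ) z :=
    ((hφC2.contDiffAt hzmem).fderiv_right (m := 1) (by norm_num)).differentiableAt one_ne_zero
  have hfe : fderiv ℝ (fun w => k * φ w - χk w) =ᶠ[nhds z]
      fun y => k • fderiv ℝ φ y - D y := by
    filter_upwards [hφdiff, hD] with y h1 h2
    rw [fderiv_fun_sub (h1.const_mul k) h2.differentiableAt, fderiv_const_mul h1 k, h2.fderiv]
  have hG : DifferentiableAt ℝ (fun y => k • fderiv ℝ φ y - D y) z :=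
    (hdφ.const_smul k).sub hD2.differentiableAt
  have hdF : DifferentiableAt ℝ (fderiv ℝ (fun w => k * φ w - χk w)) z :=
    hfe.differentiableAt_iff.2 hG
  have hA : fderiv ℝ (fderiv ℝ (fun w => k * φ w - χk w)) z
      = k • fderiv ℝ (fderiv ℝ φ) z - D2 := by
    rw [hfe.fderiv_eq, fderiv_fun_sub (f := fun y => k • fderiv ℝ φ y) (hdφ.const_smul k) hD2.differentiableAt,
      fderiv_fun_const_smul hdφ k, hD2.fderiv]
  refine ⟨?_, hdF, ?_⟩
  · filter_upwards [hφdiff, hD] with y h1 h2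
    exact (h1.const_mul k).sub h2.differentiableAt
  · intro w
    have h5 := hLevi z hzΩ w
    have hb := hbound w
    rw [LeviForm] at h5
    rw [LeviForm, hA]
    simp only [ContinuousLinearMap.sub_apply, ContinuousLinearMap.smul_apply, smul_eq_mul]
    nlinarith [mul_le_mul_of_nonneg_left h5 hk0.le, norm_nonneg w]
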